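/- Let s > 0 be non-integer, 𝔟 = 1 − 2(s − ⌊s⌋), d_s = 2^𝔟·Γ((1+𝔟)/2)·⌊s⌋!/Γ(s), and let λ > 0. Define ψ_{s,λ}(y) = ψ_s(√λ·y). Then y^𝔟 · d/dy[ ((D_𝔟 + λ)^{⌊s⌋} ψ_{s,λ})(y) ] → −d_s·λ^s as y → 0⁺, where the operator (D_𝔟 + λ)^{⌊s⌋} is applied pointwise on (0, ∞). -/

import Mathlib

open MeasureTheory Real Filter Set

/-- The modified Bessel function of the second kind, for `y > 0` given by
`K_s(y) = ∫_0^∞ e^{−y·cosh t}·cosh(s·t) dt`. -/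
noncomputable def besselK (s y : ℝ) : ℝ :=
  ∫ t in Set.Ioi (0 : ℝ), Real.exp (-(y * Real.cosh t)) * Real.cosh (s * t)

/-- `ψ_s(y) = (2^{1−s}/Γ(s))·|y|^s·K_s(|y|)` for `y ≠ 0`, and `ψ_s(0) = 1`. -/
noncomputable def psi (s : ℝ) (y : ℝ) : ℝ :=
  if y = 0 then 1
  else (2 : ℝ) ^ (1 - s) / Real.Gamma s * |y| ^ s * besselK s |y|

/-- The operator `f ↦ D_b f + λ·f`, where `(D_b f)(y) = −f''(y) − (b/y)·f'(y)`. -/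
noncomputable def DLam (b lam : ℝ) (f : ℝ → ℝ) : ℝ → ℝ :=
  fun y => -(deriv (deriv f) y) - b / y * deriv f y + lam * f y

/-- The `n`-fold iterate `(D_b + λ)^n f`, computed pointwise. -/
noncomputable def DLamIter (b lam : ℝ) (n : ℕ) (f : ℝ → ℝ) : ℝ → ℝ :=
  (DLam b lam)^[n] f

/-!
Write `φ_ν(y) = (√λ y)^ν K_ν(√λ y)`. Differentiating the integral defining `K_ν` under the
integral sign, and integrating it by parts, gives `K_ν' = -(K_{ν+1} + K_{ν-1})/2` and
`2ν K_ν(z) = z (K_{ν+1}(z) - K_{ν-1}(z))`; hence `φ_ν' = -λ y φ_{ν-1}` and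
`(D_b + λ) φ_ν = λ (b + 2ν - 1) φ_{ν-1}`. On `(0, ∞)` the function `ψ_{s,λ}` is
`2^{1-s}/Γ(s) · φ_s`, so with `n = ⌊s⌋`, `σ = s - n` and `𝔟 = 1 - 2σ` the `n`-fold iterate is
`2^{1-s}/Γ(s) · (2λ)^n n! · φ_σ`. Finally `y^{1-2σ} φ_σ'(y) = -λ^σ z^{1-σ} K_{1-σ}(z)` with
`z = √λ y`, and for `μ > 0` the substitution `w = (z/2) e^t` together with dominated convergence
gives `z^μ K_μ(z) → 2^{μ-1} Γ(μ)` as `z → 0⁺`.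
-/

open scoped Topology

lemma sq_div_four_le_cosh (t : ℝ) : t ^ 2 / 4 ≤ cosh t := by
  have h := quadratic_le_exp_of_nonneg (abs_nonneg t)
  rw [sq_abs] at h
  rw [← cosh_abs, cosh_eq]
  linarith [exp_pos (-|t|), abs_nonneg t]

lemma abs_sinh_le_cosh (t : ℝ) : |sinh t| ≤ cosh t :=
  (abs_sinh t).trans_le ((sinh_lt_cosh _).le.trans (cosh_abs t).le)

lemma integrable_exp_mul_sub_mul_cosh (c : ℝ) {y : ℝ} (hy : 0 < y) :
    Integrable fun t => exp (c * t - y * cosh t) := by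
  refine ((integrable_exp_neg_mul_sq (by positivity : 0 < y / 8)).const_mul
    (exp (2 * c ^ 2 / y))).mono' (by fun_prop) (ae_of_all _ fun t => ?_)
  have hct : c * t ≤ y / 8 * t ^ 2 + 2 * c ^ 2 / y := by
    have : y / 8 * t ^ 2 + 2 * c ^ 2 / y - c * t = (y * t - 4 * c) ^ 2 / (8 * y) := by
      field_simp; ring
    linarith [(by positivity : 0 ≤ (y * t - 4 * c) ^ 2 / (8 * y))]
  rw [norm_of_nonneg (exp_pos _).le, ← exp_add, exp_le_exp]
  linarith [mul_le_mul_of_nonneg_left (sq_div_four_le_cosh t) hy.le]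

lemma exp_neg_mul_cosh_mul_cosh (a y t : ℝ) :
    exp (-(y * cosh t)) * cosh (a * t)
      = (exp (a * t - y * cosh t) + exp (-a * t - y * cosh t)) / 2 := by
  rw [cosh_eq (a * t), sub_eq_add_neg, sub_eq_add_neg, exp_add, exp_add, neg_mul]; ring

lemma integrable_besselK_integrand (a : ℝ) {y : ℝ} (hy : 0 < y) :
    Integrable fun t => exp (-(y * cosh t)) * cosh (a * t) := by
  simp_rw [exp_neg_mul_cosh_mul_cosh]
  exact ((integrable_exp_mul_sub_mul_cosh a hy).add
    (integrable_exp_mul_sub_mul_cosh (-a) hy)).div_const 2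

lemma cosh_mul_cosh_mul (a t : ℝ) :
    cosh t * cosh (a * t) = (cosh ((a + 1) * t) + cosh ((a - 1) * t)) / 2 := by
  rw [add_mul, sub_mul, one_mul, cosh_add, cosh_sub]; ring

lemma sinh_mul_sinh_mul (a t : ℝ) :
    sinh t * sinh (a * t) = (cosh ((a + 1) * t) - cosh ((a - 1) * t)) / 2 := by
  rw [add_mul, sub_mul, one_mul, cosh_add, cosh_sub]; ring

lemma hasDerivAt_besselK' (a : ℝ) {y : ℝ} (hy : 0 < y) :
    HasDerivAt (besselK a) (-(besselK (a + 1) y + besselK (a - 1) y) / 2) y := by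
  set k : ℝ → ℝ → ℝ → ℝ := fun ν x t => exp (-(x * cosh t)) * cosh (ν * t)
  have hk : ∀ ν, ∀ x > 0, IntegrableOn (k ν x) (Ioi 0) := fun ν x hx =>
    (integrable_besselK_integrand ν hx).integrableOn
  have hderiv : ∀ x t,
      HasDerivAt (fun x => k a x t) (-(k (a + 1) x t + k (a - 1) x t) / 2) x := by
    intro x t
    have := ((((hasDerivAt_id' x).mul_const (cosh t)).fun_neg).exp).mul_const (cosh (a * t))
    refine this.congr_deriv ?_
    simp only [k, one_mul]
    linear_combination (-exp (-(x * cosh t))) * cosh_mul_cosh_mul a t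
  have hk_pos : ∀ ν x t, 0 < k ν x t := fun ν x t => mul_pos (exp_pos _) (cosh_pos _)
  have hk_anti : ∀ ν t, ∀ x ∈ Ioi (y / 2), k ν x t ≤ k ν (y / 2) t := fun ν t x hx =>
    mul_le_mul_of_nonneg_right (exp_le_exp.2 (by nlinarith [cosh_pos t, mem_Ioi.1 hx]))
      (cosh_pos _).le
  obtain ⟨-, h⟩ := hasDerivAt_integral_of_dominated_loc_of_deriv_le
    (μ := volume.restrict (Ioi 0))
    (F := fun x t => k a x t) (F' := fun x t => -(k (a + 1) x t + k (a - 1) x t) / 2)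
    (bound := fun t => (k (a + 1) (y / 2) t + k (a - 1) (y / 2) t) / 2)
    (Ioi_mem_nhds (half_lt_self hy))
    (Eventually.of_forall fun x => (by fun_prop : Continuous (k a x)).aestronglyMeasurable)
    (hk a y hy) (by fun_prop)
    (ae_of_all _ fun t x hx => by
      rw [norm_div, norm_neg, Real.norm_of_nonneg (add_pos (hk_pos _ _ _) (hk_pos _ _ _)).le,
        Real.norm_two]
      gcongr <;> exact hk_anti _ t x hx)
    (((hk _ _ (half_pos hy)).add (hk _ _ (half_pos hy))).div_const 2)
    (ae_of_all _ fun t x _ => hderiv x t)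
  rw [integral_div, integral_neg, integral_add (hk _ _ hy) (hk _ _ hy)] at h
  exact h

lemma besselK_recurrence (a : ℝ) {y : ℝ} (hy : 0 < y) :
    a * besselK a y = y / 2 * (besselK (a + 1) y - besselK (a - 1) y) := by
  set k : ℝ → ℝ → ℝ := fun ν t => exp (-(y * cosh t)) * cosh (ν * t)
  have hk : ∀ ν, IntegrableOn (k ν) (Ioi 0) := fun ν =>
    (integrable_besselK_integrand ν hy).integrableOn
  set f : ℝ → ℝ := fun t => exp (-(y * cosh t)) * sinh (a * t)
  set f' : ℝ → ℝ := fun t => a * k a t - y / 2 * (k (a + 1) t - k (a - 1) t)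
  have hderiv : ∀ t, HasDerivAt f (f' t) t := by
    intro t
    have := (((hasDerivAt_cosh t).const_mul y).fun_neg.exp).mul
      (((hasDerivAt_id' t).const_mul a).sinh)
    refine this.congr_deriv ?_
    simp only [k, f', mul_one]
    linear_combination (-y * exp (-(y * cosh t))) * sinh_mul_sinh_mul a t
  have hdiff : IntegrableOn (fun t => k (a + 1) t - k (a - 1) t) (Ioi 0) := (hk _).sub (hk _)
  have hf'_int : IntegrableOn f' (Ioi 0) := ((hk a).const_mul a).sub (hdiff.const_mul _)
  have hf_int : IntegrableOn f (Ioi 0) := by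
    refine (hk a).mono' (by fun_prop : Continuous f).aestronglyMeasurable (ae_of_all _ fun t => ?_)
    simp only [f, k, norm_mul, Real.norm_eq_abs, abs_of_pos (exp_pos _)]
    gcongr
    exact abs_sinh_le_cosh _
  have h := integral_Ioi_of_hasDerivAt_of_tendsto' (fun t _ => hderiv t) hf'_int
    (tendsto_zero_of_hasDerivAt_of_integrableOn_Ioi (fun t _ => hderiv t) hf'_int hf_int)
  simp only [f'] at h
  rw [integral_sub ((hk a).const_mul a) (hdiff.const_mul _), integral_const_mul,
    integral_const_mul, integral_sub (hk _) (hk _)] at h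
  simp only [f, mul_zero, sinh_zero, zero_sub, neg_zero] at h
  exact sub_eq_zero.1 h

lemma hasDerivAt_besselK (a : ℝ) {y : ℝ} (hy : 0 < y) :
    HasDerivAt (besselK a) (-besselK (a - 1) y - a / y * besselK a y) y :=
  (hasDerivAt_besselK' a hy).congr_deriv <| by
    field_simp
    linear_combination 2 * besselK_recurrence a hy

lemma besselK_neg (a y : ℝ) : besselK (-a) y = besselK a y := by
  simp only [besselK, neg_mul, cosh_neg]

lemma hasDerivAt_rpow_mul_besselK (a : ℝ) {z : ℝ} (hz : 0 < z) :
    HasDerivAt (fun x => x ^ a * besselK a x) (-(z ^ a * besselK (a - 1) z)) z :=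
  ((hasDerivAt_rpow_const (Or.inl hz.ne')).mul (hasDerivAt_besselK a hz)).congr_deriv <| by
    rw [rpow_sub_one hz.ne']
    field_simp
    ring

lemma two_mul_besselK_eq_integral (a : ℝ) {z : ℝ} (hz : 0 < z) :
    2 * besselK a z = ∫ t, exp (a * t - z * cosh t) := by
  have h_even : ∀ t,
      exp (-(z * cosh |t|)) * cosh (a * |t|) = exp (-(z * cosh t)) * cosh (a * t) := by
    intro t
    rcases abs_cases t with ⟨ht, -⟩ | ⟨ht, -⟩ <;> simp [ht]
  have h_neg : ∫ t, exp (-a * t - z * cosh t) = ∫ t, exp (a * t - z * cosh t) := by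
    simpa using integral_neg_eq_self (fun t => exp (a * t - z * cosh t)) volume
  rw [besselK, ← integral_comp_abs, funext h_even]
  simp_rw [exp_neg_mul_cosh_mul_cosh]
  rw [integral_div, integral_add (integrable_exp_mul_sub_mul_cosh a hz)
    (integrable_exp_mul_sub_mul_cosh (-a) hz), h_neg]
  ring

lemma rpow_mul_integral_exp_mul_sub_mul_cosh (a : ℝ) {z : ℝ} (hz : 0 < z) :
    (z / 2) ^ a * ∫ t, exp (a * t - z * cosh t)
      = ∫ w in Ioi 0, exp (-(w + z ^ 2 / (4 * w))) * w ^ (a - 1) := by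
  have hz2 : 0 < z / 2 := half_pos hz
  have h_image : (fun t => z / 2 * exp t) '' univ = Ioi 0 := by
    rw [image_univ, show (fun t => z / 2 * exp t) = (z / 2 * ·) ∘ exp from rfl, range_comp,
      range_exp, image_mul_left_Ioi hz2, mul_zero]
  rw [← h_image, integral_image_eq_integral_abs_deriv_smul MeasurableSet.univ
    (fun t _ => ((hasDerivAt_exp t).const_mul (z / 2)).hasDerivWithinAt)
    ((mul_right_injective₀ hz2.ne').comp exp_injective).injOn, Measure.restrict_univ,
    ← integral_const_mul]
  congr 1
  ext t
  rw [abs_of_pos (by positivity), smul_eq_mul, mul_rpow hz2.le (exp_pos t).le, ← exp_mul,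
    rpow_sub_one hz2.ne', cosh_eq]
  have h_inv : z ^ 2 / (4 * (z / 2 * exp t)) = z / 2 * exp (-t) := by
    rw [exp_neg]; field_simp; ring
  have h_exp : exp (a * t - z * ((exp t + exp (-t)) / 2))
      = exp t * exp (-(z / 2 * exp t + z / 2 * exp (-t))) * exp (t * (a - 1)) := by
    rw [← exp_add, ← exp_add]; ring_nf
  rw [h_inv, h_exp]
  field_simp

lemma tendsto_integral_exp_neg_add_sq_div (a : ℝ) (ha : 0 < a) :
    Tendsto (fun z => ∫ w in Ioi 0, exp (-(w + z ^ 2 / (4 * w))) * w ^ (a - 1)) (𝓝 0)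
      (𝓝 (Gamma a)) := by
  rw [Gamma_eq_integral ha]
  refine tendsto_integral_filter_of_dominated_convergence _
    (Eventually.of_forall fun z => ?_) (Eventually.of_forall fun z => ?_)
    (GammaIntegral_convergent ha) (ae_restrict_of_forall_mem measurableSet_Ioi fun w hw => ?_)
  · exact (ContinuousOn.mul (by fun_prop (disch := exact fun w (hw : 0 < w) => by positivity))
      (continuousOn_id.rpow_const fun w hw => Or.inl (ne_of_gt hw))).aestronglyMeasurable
      measurableSet_Ioi
  · refine ae_restrict_of_forall_mem measurableSet_Ioi fun w (hw : 0 < w) => ?_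
    rw [norm_mul, norm_of_nonneg (exp_pos _).le, norm_of_nonneg (rpow_pos_of_pos hw _).le]
    gcongr
    linarith [(by positivity : 0 ≤ z ^ 2 / (4 * w))]
  · have : Continuous fun z => exp (-(w + z ^ 2 / (4 * w))) * w ^ (a - 1) := by fun_prop
    simpa using this.tendsto 0

lemma tendsto_rpow_mul_besselK {a : ℝ} (ha : 0 < a) :
    Tendsto (fun z => z ^ a * besselK a z) (𝓝[>] 0) (𝓝 (2 ^ (a - 1) * Gamma a)) := by
  refine (((tendsto_integral_exp_neg_add_sq_div a ha).mono_left nhdsWithin_le_nhds).const_mul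
    (2 ^ (a - 1))).congr' (eventually_nhdsWithin_of_forall fun z (hz : 0 < z) => ?_)
  have h_split : z ^ a = 2 ^ a * (z / 2) ^ a := by
    rw [← mul_rpow zero_le_two (half_pos hz).le, mul_div_cancel₀ z two_ne_zero]
  rw [← rpow_mul_integral_exp_mul_sub_mul_cosh a hz, ← two_mul_besselK_eq_integral a hz]
  dsimp only
  rw [h_split, rpow_sub_one two_ne_zero]
  field_simp

noncomputable def phi (lam ν y : ℝ) : ℝ :=
  (√lam * y) ^ ν * besselK ν (√lam * y)

lemma hasDerivAt_phi {lam : ℝ} (hlam : 0 < lam) (ν : ℝ) {y : ℝ} (hy : 0 < y) :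
    HasDerivAt (phi lam ν) (-(lam * y * phi lam (ν - 1) y)) y := by
  have hz : 0 < √lam * y := mul_pos (sqrt_pos.2 hlam) hy
  refine ((hasDerivAt_rpow_mul_besselK ν hz).comp y
    ((hasDerivAt_id' y).const_mul √lam)).congr_deriv ?_
  rw [phi, rpow_sub_one hz.ne']
  field_simp
  rw [sq_sqrt hlam.le]
  ring

lemma phi_recurrence {lam : ℝ} (hlam : 0 < lam) (ν : ℝ) {y : ℝ} (hy : 0 < y) :
    lam * y ^ 2 * phi lam (ν - 2) y = phi lam ν y - 2 * (ν - 1) * phi lam (ν - 1) y := by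
  have hz : 0 < √lam * y := mul_pos (sqrt_pos.2 hlam) hy
  have h := besselK_recurrence (ν - 1) hz
  rw [sub_add_cancel, sub_sub, one_add_one_eq_two] at h
  have h_lam : lam * y ^ 2 = (√lam * y) ^ 2 := by rw [mul_pow, sq_sqrt hlam.le]
  have h1 : (√lam * y) ^ (ν - 1) = (√lam * y) ^ (ν - 2) * (√lam * y) := by
    rw [← rpow_add_one hz.ne']; ring_nf
  have h2 : (√lam * y) ^ ν = (√lam * y) ^ (ν - 2) * (√lam * y) ^ 2 := by
    rw [← rpow_natCast, ← rpow_add hz]; norm_num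
  simp only [phi, h_lam, h1, h2]
  linear_combination (2 * (√lam * y) ^ (ν - 2) * (√lam * y)) * h

lemma DLam_phi {lam : ℝ} (hlam : 0 < lam) (b ν : ℝ) :
    EqOn (DLam b lam (phi lam ν)) (fun y => lam * (b + 2 * ν - 1) * phi lam (ν - 1) y)
      (Ioi 0) := by
  intro y (hy : 0 < y)
  have h_deriv : EqOn (deriv (phi lam ν)) (fun x => -(lam * x * phi lam (ν - 1) x)) (Ioi 0) :=
    fun x hx => (hasDerivAt_phi hlam ν hx).deriv
  have h_deriv2 : deriv (deriv (phi lam ν)) y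
      = -(lam * phi lam (ν - 1) y + lam * y * -(lam * y * phi lam (ν - 1 - 1) y)) := by
    rw [(h_deriv.eventuallyEq_of_mem (Ioi_mem_nhds hy)).deriv_eq]
    exact ((((hasDerivAt_id' y).const_mul lam).mul (hasDerivAt_phi hlam (ν - 1) hy)).neg).deriv
      |>.trans (by ring)
  rw [sub_sub, one_add_one_eq_two] at h_deriv2
  have h_drift : b / y * -(lam * y * phi lam (ν - 1) y) = -(b * lam * phi lam (ν - 1) y) := by
    field_simp
  simp only [DLam, h_deriv2, h_deriv hy, h_drift]
  linear_combination (-lam) * phi_recurrence hlam ν hy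

lemma DLam_const_mul (b lam c : ℝ) (f : ℝ → ℝ) :
    DLam b lam (fun t => c * f t) = fun y => c * DLam b lam f y := by
  ext y
  simp only [DLam, deriv_const_mul_field']
  ring

lemma DLamIter_const_mul (b lam c : ℝ) (n : ℕ) (f : ℝ → ℝ) :
    DLamIter b lam n (fun t => c * f t) = fun y => c * DLamIter b lam n f y := by
  induction n with
  | zero => rfl
  | succ n ih =>
    simp only [DLamIter, Function.iterate_succ_apply'] at ih ⊢
    rw [ih, DLam_const_mul]

lemma DLam_congr {b lam : ℝ} {f g : ℝ → ℝ} {U : Set ℝ} (hU : IsOpen U) (h : EqOn f g U) :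
    EqOn (DLam b lam f) (DLam b lam g) U := by
  have h' := h.deriv hU
  intro y hy
  simp only [DLam, h hy, h' hy, h'.deriv hU hy]

lemma DLamIter_congr {b lam : ℝ} {f g : ℝ → ℝ} {U : Set ℝ} (hU : IsOpen U)
    (h : EqOn f g U) (n : ℕ) : EqOn (DLamIter b lam n f) (DLamIter b lam n g) U := by
  induction n with
  | zero => exact h
  | succ n ih =>
    simp only [DLamIter, Function.iterate_succ_apply'] at ih ⊢
    exact DLam_congr hU ih

lemma DLamIter_phi {lam : ℝ} (hlam : 0 < lam) (b ν : ℝ) (n : ℕ) :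
    EqOn (DLamIter b lam n (phi lam ν))
      (fun y => (∏ i ∈ Finset.range n, lam * (b + 2 * (ν - i) - 1)) * phi lam (ν - n) y)
      (Ioi 0) := by
  induction n with
  | zero => intro y _; simp [DLamIter]
  | succ n ih =>
    intro y hy
    rw [DLamIter, Function.iterate_succ_apply', ← DLamIter, DLam_congr isOpen_Ioi ih hy,
      DLam_const_mul]
    dsimp only
    rw [DLam_phi hlam b (ν - n) hy, Finset.prod_range_succ]
    push_cast
    ring_nf

lemma tendsto_rpow_mul_deriv_phi {lam : ℝ} (hlam : 0 < lam) {σ : ℝ} (hσ : σ < 1) :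
    Tendsto (fun y => y ^ (1 - 2 * σ) * deriv (phi lam σ) y) (𝓝[>] 0)
      (𝓝 (-(lam ^ σ * (2 ^ (-σ) * Gamma (1 - σ))))) := by
  have hr : 0 < √lam := sqrt_pos.2 hlam
  have h_scale : Tendsto (fun y => √lam * y) (𝓝[>] 0) (𝓝[>] 0) :=
    tendsto_iff_comap.2 (comap_mulLeft_nhdsGT_zero hr).ge
  have h_lim := (((tendsto_rpow_mul_besselK (sub_pos.2 hσ)).comp h_scale).const_mul
    (lam ^ σ)).neg
  rw [sub_sub_cancel_left] at h_lim
  refine h_lim.congr' (eventually_nhdsWithin_of_forall fun y (hy : 0 < y) => ?_)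
  have h_pow : y ^ (1 - 2 * σ) * (lam * y * (√lam * y) ^ (σ - 1))
      = lam ^ σ * (√lam * y) ^ (1 - σ) := by
    refine log_injOn_pos (mem_Ioi.2 (by positivity)) (mem_Ioi.2 (by positivity)) ?_
    have hz : 0 < √lam * y := mul_pos hr hy
    rw [log_mul (by positivity) (by positivity), log_mul (by positivity) (by positivity),
      log_mul (by positivity) (by positivity), log_mul (by positivity) (by positivity),
      log_rpow hy, log_rpow hz, log_rpow hlam, log_rpow hz, log_mul hr.ne' hy.ne',
      log_sqrt hlam.le]
    ring
  dsimp only [Function.comp_apply]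
  have h_even : besselK (σ - 1) (√lam * y) = besselK (1 - σ) (√lam * y) := by
    rw [← besselK_neg, neg_sub]
  rw [(hasDerivAt_phi hlam σ hy).deriv, phi, h_even]
  linear_combination (besselK (1 - σ) (√lam * y)) * h_pow

lemma prod_range_natCast_sub (n : ℕ) :
    ∏ i ∈ Finset.range n, ((n : ℝ) - i) = n.factorial := by
  rw [← Nat.descFactorial_self, Nat.descFactorial_eq_prod_range, Nat.cast_prod]
  exact Finset.prod_congr rfl fun i hi => (Nat.cast_sub (Finset.mem_range.1 hi).le).symm

lemma DLamIter_psi {lam : ℝ} (hlam : 0 < lam) (s : ℝ) (n : ℕ) :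
    EqOn (DLamIter (1 - 2 * (s - n)) lam n fun t => psi s (√lam * t))
      (fun y => 2 ^ (1 - s) / Gamma s * ((2 * lam) ^ n * n.factorial) * phi lam (s - n) y)
      (Ioi 0) := by
  have h_psi : EqOn (fun t => psi s (√lam * t)) (fun t => 2 ^ (1 - s) / Gamma s * phi lam s t)
      (Ioi 0) := fun t (ht : 0 < t) => by
    have hz : 0 < √lam * t := mul_pos (sqrt_pos.2 hlam) ht
    simp only [psi, phi, if_neg hz.ne', abs_of_pos hz]
    ring
  have h_prod : ∏ i ∈ Finset.range n, lam * (1 - 2 * (s - n) + 2 * (s - i) - 1)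
      = (2 * lam) ^ n * n.factorial := by
    rw [Finset.prod_congr rfl fun (i : ℕ) _ => show lam * (1 - 2 * (s - n) + 2 * (s - i) - 1)
      = 2 * lam * ((n : ℝ) - i) by ring, Finset.prod_mul_distrib, Finset.prod_const,
      Finset.card_range, prod_range_natCast_sub]
  intro y hy
  rw [DLamIter_congr isOpen_Ioi h_psi n hy, DLamIter_const_mul]
  dsimp only
  rw [DLamIter_phi hlam _ s n hy, h_prod]
  ring

theorem psi_weighted_derivative_limit_general (s : ℝ)
    (b : ℝ) (hb : b = 1 - 2 * (s - (⌊s⌋₊ : ℝ)))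
    (d : ℝ)
    (hd : d = (2 : ℝ) ^ b * Real.Gamma ((1 + b) / 2) * (Nat.factorial ⌊s⌋₊ : ℝ)
            / Real.Gamma s)
    (lam : ℝ) (hlam : 0 < lam) :
    Filter.Tendsto
      (fun y : ℝ =>
        y ^ b * deriv (DLamIter b lam ⌊s⌋₊ (fun t => psi s (Real.sqrt lam * t))) y)
      (nhdsWithin 0 (Set.Ioi 0)) (nhds (-(d * lam ^ s))) := by
  set n := ⌊s⌋₊
  subst hb hd
  set c := 2 ^ (1 - s) / Gamma s * ((2 * lam) ^ n * n.factorial)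
  have h_const : c * -(lam ^ (s - n) * (2 ^ (-(s - n)) * Gamma (1 - (s - n))))
      = -(2 ^ (1 - 2 * (s - n)) * Gamma ((1 + (1 - 2 * (s - n))) / 2) * n.factorial / Gamma s
        * lam ^ s) := by
    have h_two : (2 : ℝ) ^ (1 - s) * 2 ^ n * 2 ^ (-(s - n)) = 2 ^ (1 - 2 * (s - n)) := by
      rw [← rpow_natCast, ← rpow_add two_pos, ← rpow_add two_pos]
      ring_nf
    have h_lam : lam ^ n * lam ^ (s - n) = lam ^ s := by
      rw [← rpow_natCast, ← rpow_add hlam, add_sub_cancel]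
    rw [← h_two, ← h_lam, show (1 + (1 - 2 * (s - n))) / 2 = 1 - (s - n) by ring]
    ring
  have h_lim := (tendsto_rpow_mul_deriv_phi hlam (σ := s - n)
    (by linarith [Nat.lt_floor_add_one s])).const_mul c
  rw [h_const] at h_lim
  refine h_lim.congr' (eventually_nhdsWithin_of_forall fun y hy => ?_)
  dsimp only
  rw [(DLamIter_psi hlam s n).deriv isOpen_Ioi hy, deriv_const_mul_field']
  ring

/-- for non-integer `s > 0`, `𝔟 = 1 − 2(s − ⌊s⌋)`,
`d_s = 2^𝔟·Γ((1+𝔟)/2)·⌊s⌋!/Γ(s)` and `λ > 0`, with `ψ_{s,λ}(y) = ψ_s(√λ·y)`,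
one has `y^𝔟·∂_y((D_𝔟 + λ)^{⌊s⌋} ψ_{s,λ})(y) → −d_s·λ^s` as `y → 0⁺`. -/
theorem psi_weighted_derivative_limit (s : ℝ) (hs : 0 < s) (hni : ∀ n : ℤ, s ≠ n)
    (b : ℝ) (hb : b = 1 - 2 * (s - (⌊s⌋₊ : ℝ)))
    (d : ℝ)
    (hd : d = (2 : ℝ) ^ b * Real.Gamma ((1 + b) / 2) * (Nat.factorial ⌊s⌋₊ : ℝ)
            / Real.Gamma s)
    (lam : ℝ) (hlam : 0 < lam) :
    Filter.Tendsto
      (fun y : ℝ =>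
        y ^ b * deriv (DLamIter b lam ⌊s⌋₊ (fun t => psi s (Real.sqrt lam * t))) y)
      (nhdsWithin 0 (Set.Ioi 0)) (nhds (-(d * lam ^ s))) :=
  psi_weighted_derivative_limit_general s b hb d hd lam hlam
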